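/- For w ∈ S_m, a subset J ⊆ [m] lies in the w-chamber set H(w) if and only if its padding pad(J) satisfies the alignment condition for the decorated permutation ŵ = [2m, 2m−1, ..., m+1, w^{-1}(m), ..., w^{-1}(1)]: for every alignment {i,j} of ŵ, if i ∈ pad(J) then j ∈ pad(J). -/

import Mathlib

def cpos {n : ℕ} (i a : Fin n) : ℕ := ((a - i : Fin n) : ℕ)

def CyclicallyOrdered {n : ℕ} (a b c d : Fin n) : Prop :=
  0 < cpos a b ∧ cpos a b < cpos a c ∧ cpos a c < cpos a d

instance {n : ℕ} (a b c d : Fin n) : Decidable (CyclicallyOrdered a b c d) := by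
  unfold CyclicallyOrdered; infer_instance

def WeaklySeparated {n : ℕ} (I J : Finset (Fin n)) : Prop :=
  ¬ ∃ a b a' b' : Fin n, CyclicallyOrdered a b a' b' ∧
    a ∈ I \ J ∧ a' ∈ I \ J ∧ b ∈ J \ I ∧ b' ∈ J \ I

def cycIco {n : ℕ} (i j : Fin n) : Finset (Fin n) :=
  Finset.univ.filter (fun x => cpos i x < cpos i j)

def cycIcc {n : ℕ} (i j : Fin n) : Finset (Fin n) :=
  Finset.univ.filter (fun x => cpos i x ≤ cpos i j)

def cycOpen {n : ℕ} (i j : Fin n) : Finset (Fin n) :=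
  Finset.univ.filter (fun x => 0 < cpos i x ∧ cpos i x < cpos i j)

def IsGrassmannNecklace {n : ℕ} [NeZero n] (k : ℕ) (I : Fin n → Finset (Fin n)) : Prop :=
  (∀ i, (I i).card = k) ∧ (∀ i, I i \ {i} ⊆ I (i + 1)) ∧ (∀ i, i ∉ I i → I (i + 1) = I i)

def leShift {n : ℕ} (i : Fin n) (A B : Finset (Fin n)) : Prop :=
  List.Forall₂ (· ≤ ·) ((A.image (fun x => x - i)).sort (· ≤ ·))
    ((B.image (fun x => x - i)).sort (· ≤ ·))

def MemPositroid {n : ℕ} (I : Fin n → Finset (Fin n)) (J : Finset (Fin n)) : Prop :=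
  ∀ i, leShift i (I i) J

def IsWSCollection {n : ℕ} (C : Finset (Finset (Fin n))) : Prop :=
  ∀ X ∈ C, ∀ Y ∈ C, WeaklySeparated X Y

def IsMaxWSCollection {n : ℕ} (k : ℕ) (C : Finset (Finset (Fin n))) : Prop :=
  (∀ X ∈ C, X.card = k) ∧ IsWSCollection C ∧
  ∀ C' : Finset (Finset (Fin n)), C ⊆ C' → (∀ X ∈ C', X.card = k) → IsWSCollection C' → C' = C

/-- Padding: J ⊆ [m] becomes the m-element subset of [2m] obtained by
adjoining the m − |J| largest elements of (m, 2m]. -/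
def pad (m : ℕ) (J : Finset (Fin m)) : Finset (Fin (2 * m)) :=
  J.image (Fin.castLE (by omega)) ∪
    Finset.univ.filter (fun x => m + J.card ≤ (x : ℕ))

/-!
Inverting `ŵ` explicitly (`i ↦ 2m−1−w(i)` on the first half, `i ↦ 2m−1−i` on the second), the
cyclic-order condition becomes plain arithmetic: no alignment joins the two halves, the alignments
inside `[m]` are the pairs `a < b` with `w a < w b`, and those inside `(m, 2m]` go upwards. Since
`pad J` meets `(m, 2m]` in a final segment, the alignment condition there holds automatically, and
on `[m]` it is the defining condition of `H(w)`.
-/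

def IsAlignment {n : ℕ} (π : Equiv.Perm (Fin n)) (i j : Fin n) : Prop :=
  CyclicallyOrdered (π.symm i) i j (π.symm j)

/-- The decorated permutation `ŵ = [2m, 2m−1, …, m+1, w⁻¹(m), …, w⁻¹(1)]`, read with 0-based
indices. -/
def IsHatPerm {m : ℕ} (w : Equiv.Perm (Fin m)) (π : Equiv.Perm (Fin (2 * m))) : Prop :=
  ∀ i : Fin (2 * m),
    ((i : ℕ) < m → (π i : ℕ) = 2 * m - 1 - (i : ℕ)) ∧
    (∀ j : Fin m, (i : ℕ) = m + (j : ℕ) → (π i : ℕ) = (w.symm j.rev : ℕ))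

lemma cpos_eq {n : ℕ} (i a : Fin n) :
    cpos i a = if (i : ℕ) ≤ a then (a : ℕ) - i else n + a - i := by
  unfold cpos
  split_ifs with h
  · exact Fin.coe_sub_iff_le.2 h
  · exact Fin.coe_sub_iff_lt.2 (not_le.1 h)

lemma mem_pad_castLE {m : ℕ} (J : Finset (Fin m)) (a : Fin m) :
    Fin.castLE (by omega) a ∈ pad m J ↔ a ∈ J := by
  have hcard : J.card ≤ m := by simpa using J.card_le_univ
  simp only [pad, Finset.mem_union, Finset.mem_image, Finset.mem_filter, Finset.mem_univ,
    true_and, Fin.val_castLE]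
  constructor
  · rintro (⟨b, hb, hba⟩ | h)
    · rwa [← Fin.castLE_inj.1 hba]
    · omega
  · exact fun ha => Or.inl ⟨a, ha, rfl⟩

lemma mem_pad_of_le {m : ℕ} (J : Finset (Fin m)) {x : Fin (2 * m)} (hx : m ≤ (x : ℕ)) :
    x ∈ pad m J ↔ m + J.card ≤ x := by
  simp only [pad, Finset.mem_union, Finset.mem_image, Finset.mem_filter, Finset.mem_univ,
    true_and, or_iff_right_iff_imp]
  rintro ⟨a, -, rfl⟩
  simp only [Fin.val_castLE] at hx
  omega

namespace IsHatPerm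

variable {m : ℕ} {w : Equiv.Perm (Fin m)} {π : Equiv.Perm (Fin (2 * m))}

lemma symm_of_lt (hπ : IsHatPerm w π) {i : Fin (2 * m)} (hi : (i : ℕ) < m) :
    (π.symm i : ℕ) = 2 * m - 1 - w ⟨i, hi⟩ := by
  set a : Fin m := ⟨i, hi⟩
  have ha := (w a).isLt
  let x : Fin (2 * m) := ⟨2 * m - 1 - w a, by omega⟩
  have hrev : (⟨m - 1 - w a, by omega⟩ : Fin m).rev = w a := by
    ext
    simp only [Fin.val_rev]
    omega
  have hx : π x = i := by
    ext
    rw [(hπ x).2 ⟨m - 1 - w a, by omega⟩ (by simp only [x]; omega), hrev,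
      Equiv.symm_apply_apply]
  rw [π.symm_apply_eq.2 hx.symm]

lemma symm_of_le (hπ : IsHatPerm w π) {i : Fin (2 * m)} (hi : m ≤ (i : ℕ)) :
    (π.symm i : ℕ) = 2 * m - 1 - i := by
  have hi2 := i.isLt
  let x : Fin (2 * m) := ⟨2 * m - 1 - i, by omega⟩
  have hx : π x = i := by
    ext
    rw [(hπ x).1 (by simp only [x]; omega)]
    simp only [x]
    omega
  rw [π.symm_apply_eq.2 hx.symm]

lemma isAlignment_castLE_iff (hπ : IsHatPerm w π) (a b : Fin m) :
    IsAlignment π (Fin.castLE (by omega) a) (Fin.castLE (by omega) b) ↔ a < b ∧ w a < w b := by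
  have ha := (w a).isLt
  have hb := (w b).isLt
  have hπa : (π.symm (Fin.castLE (by omega) a) : ℕ) = 2 * m - 1 - w a := hπ.symm_of_lt a.isLt
  have hπb : (π.symm (Fin.castLE (by omega) b) : ℕ) = 2 * m - 1 - w b := hπ.symm_of_lt b.isLt
  simp only [IsAlignment, CyclicallyOrdered, cpos_eq, hπa, hπb, Fin.val_castLE, Fin.lt_def]
  split_ifs <;> omega

lemma isAlignment_cases (hπ : IsHatPerm w π) {i j : Fin (2 * m)} (hij : IsAlignment π i j) :
    ((i : ℕ) < m ∧ (j : ℕ) < m) ∨ (m ≤ (i : ℕ) ∧ (i : ℕ) < j) := by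
  have hi := i.isLt
  have hj := j.isLt
  unfold IsAlignment CyclicallyOrdered at hij
  rw [cpos_eq, cpos_eq, cpos_eq] at hij
  rcases lt_or_ge (i : ℕ) m with him | him <;> rcases lt_or_ge (j : ℕ) m with hjm | hjm
  · have := (w ⟨i, him⟩).isLt
    have := (w ⟨j, hjm⟩).isLt
    rw [hπ.symm_of_lt him, hπ.symm_of_lt hjm] at hij
    split_ifs at hij <;> omega
  · have := (w ⟨i, him⟩).isLt
    rw [hπ.symm_of_lt him, hπ.symm_of_le hjm] at hij
    split_ifs at hij <;> omega
  · have := (w ⟨j, hjm⟩).isLt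
    rw [hπ.symm_of_le him, hπ.symm_of_lt hjm] at hij
    split_ifs at hij <;> omega
  · rw [hπ.symm_of_le him, hπ.symm_of_le hjm] at hij
    split_ifs at hij <;> omega

end IsHatPerm

theorem stmt_19_general {m : ℕ} (w : Equiv.Perm (Fin m))
    (π : Equiv.Perm (Fin (2 * m)))
    (hπ : ∀ i : Fin (2 * m),
      ((i : ℕ) < m → (π i : ℕ) = 2 * m - 1 - (i : ℕ)) ∧
      (∀ j : Fin m, (i : ℕ) = m + (j : ℕ) → (π i : ℕ) = (w.symm j.rev : ℕ)))
    (J : Finset (Fin m)) :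
    (∀ a b : Fin m, a < b → w a < w b → a ∈ J → b ∈ J) ↔
    (∀ i j : Fin (2 * m),
      CyclicallyOrdered (π.symm i) i j (π.symm j) →
        i ∈ pad m J → j ∈ pad m J) := by
  have hπ' : IsHatPerm w π := hπ
  constructor
  · intro hJ i j hij hi
    rcases hπ'.isAlignment_cases hij with ⟨him, hjm⟩ | ⟨him, hij_lt⟩
    · obtain ⟨hab, hwab⟩ := (hπ'.isAlignment_castLE_iff ⟨i, him⟩ ⟨j, hjm⟩).1 hij
      exact (mem_pad_castLE J ⟨j, hjm⟩).2 (hJ _ _ hab hwab ((mem_pad_castLE J ⟨i, him⟩).1 hi))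
    · rw [mem_pad_of_le J him] at hi
      rw [mem_pad_of_le J (by omega)]
      omega
  · intro h a b hab hwab ha
    exact (mem_pad_castLE J b).1
      (h _ _ ((hπ'.isAlignment_castLE_iff a b).2 ⟨hab, hwab⟩) ((mem_pad_castLE J a).2 ha))

/-- J ⊆ [m] lies in the w-chamber set H(w) iff pad(J) satisfies the alignment
condition for ŵ = [2m, 2m−1, …, m+1, w⁻¹(m), …, w⁻¹(1)]: for every alignment
{i,j} of ŵ (strands ŵ⁻¹(i), i, j, ŵ⁻¹(j) cyclically ordered), i ∈ pad(J)
implies j ∈ pad(J). -/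
theorem stmt_19 {m : ℕ} (hm : 0 < m) (w : Equiv.Perm (Fin m))
    (π : Equiv.Perm (Fin (2 * m)))
    (hπ : ∀ i : Fin (2 * m),
      ((i : ℕ) < m → (π i : ℕ) = 2 * m - 1 - (i : ℕ)) ∧
      (∀ j : Fin m, (i : ℕ) = m + (j : ℕ) → (π i : ℕ) = (w.symm j.rev : ℕ)))
    (J : Finset (Fin m)) :
    (∀ a b : Fin m, a < b → w a < w b → a ∈ J → b ∈ J) ↔
    (∀ i j : Fin (2 * m),
      CyclicallyOrdered (π.symm i) i j (π.symm j) →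
        i ∈ pad m J → j ∈ pad m J) :=
  stmt_19_general w π hπ J
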